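/- Let ⟨,⟩: H₁ ⊗ H₂ → k be a pairing between Hopf algebras H₁ and H₂. If A is a partial H₂-comodule algebra with coaction ρ̄(a) = Σ a⁽⁰⁾ ⊗ a⁽¹⁾, then A becomes a partial H₁-module algebra via the partial action h · a = Σ a⁽⁰⁾ ⟨h, a⁽¹⁾⟩ for h ∈ H₁, a ∈ A. -/

import Mathlib

/-!
The action is `h · a = (I ⊗ ⟨h, -⟩) ρ(a)`. Its unit and multiplicativity axioms come from
counitality and multiplicativity of `ρ`, using `⟨1, f⟩ = ε(f)` and
`⟨h, f f'⟩ = ∑ ⟨h₁, f⟩⟨h₂, f'⟩`. For the third axiom, `h · (g · a)` is `(ρ ⊗ I) ρ(a)` with its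
two `H₂`-legs sliced by `⟨h, -⟩` and `⟨g, -⟩`; slicing the other side `(ρ(1) ⊗ 1)(I ⊗ Δ) ρ(a)`
of partial coassociativity in the same way gives `∑ (h₁ · 1)(h₂ g · a)`, because the pairing
turns products in `H₁` into convolution products of functionals on `H₂`:
`⟨h₂ g, f⟩ = ∑ ⟨h₂, f₁⟩⟨g, f₂⟩`.
-/

open TensorProduct

/-- The axioms of a (right) partial coaction `ρ : A → A ⊗ H` of a Hopf algebra `H` on a
unital algebra `A`. -/
structure IsPartialCoaction (k : Type*) [Field k] (H A : Type*) [Ring H] [HopfAlgebra k H]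
    [Ring A] [Algebra k A] (ρ : A →ₗ[k] A ⊗[k] H) : Prop where
  map_mul : ∀ a b : A, ρ (a * b) = ρ a * ρ b
  counit_id : ∀ a : A,
    (TensorProduct.rid k A) ((LinearMap.lTensor A Coalgebra.counit) (ρ a)) = a
  coassoc : ∀ a : A,
    (LinearMap.rTensor H ρ) (ρ a) =
      (ρ 1 ⊗ₜ[k] (1 : H)) *
        ((TensorProduct.assoc k A H H).symm ((LinearMap.lTensor A Coalgebra.comul) (ρ a)))

/-- The axioms of a pairing between two Hopf algebras `H₁` and `H₂`. -/
structure IsHopfPairing (k : Type*) [Field k] (H₁ H₂ : Type*)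
    [Ring H₁] [HopfAlgebra k H₁] [Ring H₂] [HopfAlgebra k H₂]
    (p : H₁ →ₗ[k] H₂ →ₗ[k] k) : Prop where
  mul_left : ∀ {ι : Type*} (h g : H₁) (f : H₂) (r : Coalgebra.Repr k f ι),
    p (h * g) f = ∑ i ∈ r.index, p h (r.left i) * p g (r.right i)
  mul_right : ∀ {ι : Type*} (h : H₁) (f f' : H₂) (r : Coalgebra.Repr k h ι),
    p h (f * f') = ∑ i ∈ r.index, p (r.left i) f * p (r.right i) f'
  one_left : ∀ f : H₂, p 1 f = Coalgebra.counit f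
  one_right : ∀ h : H₁, p h 1 = Coalgebra.counit h

/-- The axioms of a (left) partial action of a Hopf algebra `H` on a unital algebra `A`. -/
structure IsPartialAction (k : Type*) [Field k] (H A : Type*) [Ring H] [HopfAlgebra k H]
    [Ring A] [Algebra k A] (pact : H →ₗ[k] A →ₗ[k] A) : Prop where
  one_act : ∀ a : A, pact 1 a = a
  act_mul : ∀ {ι : Type*} (h : H) (a b : A) (r : Coalgebra.Repr k h ι),
    pact h (a * b) = ∑ i ∈ r.index, pact (r.left i) a * pact (r.right i) b
  act_act : ∀ {ι : Type*} (h g : H) (a : A) (r : Coalgebra.Repr k h ι),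
    pact h (pact g a) = ∑ i ∈ r.index, pact (r.left i) 1 * pact (r.right i * g) a

open Coalgebra WithConv

universe u

namespace Coalgebra.Repr

variable {R C : Type*} [CommSemiring R] [AddCommMonoid C] [Module R C] [CoalgebraStruct R C]
  {c : C} {ι : Type*}

/-- The axioms of `IsHopfPairing` only quantify over representations indexed in one fixed
universe; reindexing by `Fin n` reaches any universe. -/
noncomputable def uliftFin (r : Repr R c ι) : Repr R c (ULift.{u} (Fin r.index.card)) where
  index := Finset.univ
  left i := r.left (r.index.equivFin.symm i.down)
  right i := r.right (r.index.equivFin.symm i.down)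
  eq := by
    rw [← r.eq, ← Finset.sum_coe_sort r.index]
    exact Fintype.sum_equiv (Equiv.ulift.trans r.index.equivFin.symm) _ _ fun _ => rfl

end Coalgebra.Repr

section RightSlice

variable {R A M : Type*} [CommRing R] [AddCommGroup A] [Module R A] [AddCommGroup M] [Module R M]

/-- The slice map `a ⊗ m ↦ φ m • a`, linear in `φ`. -/
noncomputable def rightSlice : (M →ₗ[R] R) →ₗ[R] A ⊗[R] M →ₗ[R] A :=
  LinearMap.llcomp R _ _ _ (TensorProduct.rid R A).toLinearMap ∘ₗ LinearMap.lTensorHom A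

lemma rightSlice_apply (φ : M →ₗ[R] R) (w : A ⊗[R] M) :
    rightSlice φ w = TensorProduct.rid R A (φ.lTensor A w) := rfl

@[simp]
lemma rightSlice_tmul (φ : M →ₗ[R] R) (a : A) (m : M) :
    rightSlice φ (a ⊗ₜ[R] m) = φ m • a := by
  simp [rightSlice_apply]

lemma rightSlice_rTensor {B : Type*} [AddCommGroup B] [Module R B] (f : A →ₗ[R] B)
    (φ : M →ₗ[R] R) (w : A ⊗[R] M) :
    rightSlice φ (f.rTensor M w) = f (rightSlice φ w) := by
  induction w using TensorProduct.induction_on with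
  | zero => simp
  | tmul a m => simp
  | add w w' hw hw' => simp only [map_add, hw, hw']

end RightSlice

section RightSliceAlgebra

variable {R A M : Type*} [CommRing R] [Ring A] [Algebra R A] [Ring M] [Algebra R M]

lemma rightSlice_mul {ι : Type*} (s : Finset ι) (φ : M →ₗ[R] R) (ψ χ : ι → M →ₗ[R] R)
    (hφ : ∀ x y, φ (x * y) = ∑ i ∈ s, ψ i x * χ i y) (u v : A ⊗[R] M) :
    rightSlice φ (u * v) = ∑ i ∈ s, rightSlice (ψ i) u * rightSlice (χ i) v := by
  induction u using TensorProduct.induction_on with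
  | zero => simp
  | add u u' hu hu' => simp only [add_mul, map_add, hu, hu', Finset.sum_add_distrib]
  | tmul a m =>
    induction v using TensorProduct.induction_on with
    | zero => simp
    | add v v' hv hv' => simp only [mul_add, map_add, hv, hv', Finset.sum_add_distrib]
    | tmul b n =>
      simp only [Algebra.TensorProduct.tmul_mul_tmul, rightSlice_tmul, hφ, Finset.sum_smul,
        smul_mul_smul_comm]

lemma rightSlice_tmul_one_mul (φ : M →ₗ[R] R) (a : A) (w : A ⊗[R] M) :
    rightSlice φ ((a ⊗ₜ[R] (1 : M)) * w) = a * rightSlice φ w := by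
  induction w using TensorProduct.induction_on with
  | zero => simp
  | tmul b n => simp
  | add w w' hw hw' => simp only [mul_add, map_add, hw, hw']

lemma rTensor_rightSlice_tmul_one_mul {N : Type*} [Ring N] [Algebra R N] {ι : Type*}
    (s : Finset ι) (φ : M →ₗ[R] R) (ψ χ : ι → M →ₗ[R] R)
    (hφ : ∀ x y, φ (x * y) = ∑ i ∈ s, ψ i x * χ i y) (u : A ⊗[R] M) (z : (A ⊗[R] M) ⊗[R] N) :
    (rightSlice φ).rTensor N ((u ⊗ₜ[R] (1 : N)) * z) =
      ∑ i ∈ s, (rightSlice (ψ i) u ⊗ₜ[R] (1 : N)) * (rightSlice (χ i)).rTensor N z := by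
  induction z using TensorProduct.induction_on with
  | zero => simp
  | tmul w n =>
    simp only [Algebra.TensorProduct.tmul_mul_tmul, one_mul, LinearMap.rTensor_tmul,
      rightSlice_mul s φ ψ χ hφ, TensorProduct.sum_tmul]
  | add z z' hz hz' => simp only [mul_add, map_add, hz, hz', Finset.sum_add_distrib]

end RightSliceAlgebra

lemma rightSlice_convMul {R A M : Type*} [CommRing R] [AddCommGroup A] [Module R A]
    [AddCommGroup M] [Module R M] [CoalgebraStruct R M] (ψ χ : M →ₗ[R] R) (w : A ⊗[R] M) :
    rightSlice (toConv ψ * toConv χ).ofConv w =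
      rightSlice χ ((rightSlice ψ).rTensor M
        ((TensorProduct.assoc R A M M).symm (comul.lTensor A w))) := by
  induction w using TensorProduct.induction_on with
  | zero => simp
  | add w w' hw hw' => simp only [map_add, hw, hw']
  | tmul a m =>
    rw [rightSlice_tmul, LinearMap.lTensor_tmul, LinearMap.convMul_apply]
    induction comul (R := R) m using TensorProduct.induction_on with
    | zero => simp
    | tmul x y => simp [mul_smul, smul_comm (ψ x)]
    | add t t' ht ht' => simp only [map_add, add_smul, ht, ht', TensorProduct.tmul_add]

namespace IsHopfPairing

variable {k : Type*} [Field k] {H₁ H₂ : Type*} [Ring H₁] [HopfAlgebra k H₁] [Ring H₂]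
  [HopfAlgebra k H₂] {p : H₁ →ₗ[k] H₂ →ₗ[k] k}

lemma apply_mul_left (hp : IsHopfPairing k H₁ H₂ p) (h g : H₁) :
    p (h * g) = (toConv (p h) * toConv (p g)).ofConv := by
  ext f
  let r := (ℛ k f).uliftFin
  exact (hp.mul_left h g f r).trans (r.convMul_apply _ _).symm

lemma apply_mul_right {ι : Type*} (hp : IsHopfPairing k H₁ H₂ p) {h : H₁} (r : Repr k h ι)
    (f f' : H₂) : p h (f * f') = ∑ i ∈ r.index, p (r.left i) f * p (r.right i) f' :=
  (hp.mul_right h f f' r.uliftFin).trans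
    ((r.uliftFin.convMul_apply (toConv (p.flip f)) (toConv (p.flip f'))).symm.trans
      (r.convMul_apply _ _))

end IsHopfPairing

section PairingAction

variable {k : Type*} [Field k] {H₁ H₂ A : Type*} [Ring H₁] [HopfAlgebra k H₁] [Ring H₂]
  [HopfAlgebra k H₂] [Ring A] [Algebra k A] {p : H₁ →ₗ[k] H₂ →ₗ[k] k} {ρ : A →ₗ[k] A ⊗[k] H₂}

variable (p ρ) in
/-- `h · a = ∑ a⁽⁰⁾ ⟨h, a⁽¹⁾⟩`. -/
noncomputable def pairingAction : H₁ →ₗ[k] A →ₗ[k] A :=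
  LinearMap.lcomp k A ρ ∘ₗ rightSlice ∘ₗ p

lemma pairingAction_apply (h : H₁) (a : A) : pairingAction p ρ h a = rightSlice (p h) (ρ a) :=
  rfl

lemma pairingAction_one (hp : IsHopfPairing k H₁ H₂ p) (hρ : IsPartialCoaction k H₂ A ρ)
    (a : A) : pairingAction p ρ 1 a = a := by
  rw [pairingAction_apply, LinearMap.ext hp.one_left]
  exact hρ.counit_id a

lemma pairingAction_mul {ι : Type*} (hp : IsHopfPairing k H₁ H₂ p)
    (hρ : IsPartialCoaction k H₂ A ρ) (h : H₁) (a b : A) (r : Repr k h ι) :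
    pairingAction p ρ h (a * b) =
      ∑ i ∈ r.index, pairingAction p ρ (r.left i) a * pairingAction p ρ (r.right i) b := by
  rw [pairingAction_apply, hρ.map_mul]
  exact rightSlice_mul _ _ _ _ (hp.apply_mul_right r) _ _

lemma pairingAction_pairingAction {ι : Type*} (hp : IsHopfPairing k H₁ H₂ p)
    (hρ : IsPartialCoaction k H₂ A ρ) (h g : H₁) (a : A) (r : Repr k h ι) :
    pairingAction p ρ h (pairingAction p ρ g a) =
      ∑ i ∈ r.index, pairingAction p ρ (r.left i) 1 * pairingAction p ρ (r.right i * g) a := by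
  simp only [pairingAction_apply, hp.apply_mul_left, rightSlice_convMul]
  rw [← rightSlice_rTensor ρ, ← rightSlice_rTensor (rightSlice (p h)), hρ.coassoc,
    rTensor_rightSlice_tmul_one_mul _ _ _ _ (hp.apply_mul_right r), map_sum]
  simp only [rightSlice_tmul_one_mul]

theorem isPartialAction_pairingAction (hp : IsHopfPairing k H₁ H₂ p)
    (hρ : IsPartialCoaction k H₂ A ρ) : IsPartialAction k H₁ A (pairingAction p ρ) where
  one_act := pairingAction_one hp hρ
  act_mul := pairingAction_mul hp hρ
  act_act := pairingAction_pairingAction hp hρ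

end PairingAction

/-- **From partial coactions to partial actions along a Hopf pairing.**
If `⟨,⟩ : H₁ ⊗ H₂ → k` is a Hopf pairing and `(A, ρ)` is a partial `H₂`-comodule algebra,
then the map `h · a := ∑ a⁽⁰⁾ ⟨h, a⁽¹⁾⟩ = (I ⊗ ⟨h,−⟩)(ρ a)` is a partial action of `H₁`
on `A`. -/
theorem partial_coaction_to_partial_action
    (k : Type*) [Field k] (H₁ H₂ A : Type*)
    [Ring H₁] [HopfAlgebra k H₁] [Ring H₂] [HopfAlgebra k H₂] [Ring A] [Algebra k A]
    (p : H₁ →ₗ[k] H₂ →ₗ[k] k) (hp : IsHopfPairing k H₁ H₂ p)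
    (ρ : A →ₗ[k] A ⊗[k] H₂) (hρ : IsPartialCoaction k H₂ A ρ) :
    ∃ pact : H₁ →ₗ[k] A →ₗ[k] A,
      (∀ (h : H₁) (a : A),
        pact h a = (TensorProduct.rid k A) ((LinearMap.lTensor A (p h)) (ρ a))) ∧
      IsPartialAction k H₁ A pact :=
  ⟨pairingAction p ρ, fun _ _ => rfl, isPartialAction_pairingAction hp hρ⟩
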